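/- Let φ = (φ_1,…,φ_N): B_N → B_N be holomorphic. Then the identity 1 − log(1 − ⟨φ(z),w⟩) = 1 − log(1 − ⟨z,φ(w)⟩) holds for all z,w ∈ B_N if and only if there exists a Hermitian N×N complex matrix M (M equals its conjugate transpose) such that φ(z) = Mz for all z ∈ B_N; in that case M = φ'(0) and the operator norm of M is at most 1. -/

import Mathlib

open ComplexConjugate

/-- The open unit ball of `ℂ^N` (Euclidean norm). -/
def unitBall (N : ℕ) : Set (Fin N → ℂ) := {z | ∑ j, ‖z j‖ ^ 2 < 1}

/-- The Jacobian matrix `φ'(0)`, with `(i, j)` entry `(∂φ_i/∂z_j)(0)`. -/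
noncomputable def jac0 (N : ℕ) (φ : (Fin N → ℂ) → Fin N → ℂ) :
    Matrix (Fin N) (Fin N) ℂ :=
  Matrix.of fun i j => fderiv ℂ φ 0 (Pi.single j 1) i

/-!
Both sides of the identity are `1 - log (1 - u)` with `‖u‖ < 1`, and `u ↦ 1 - log (1 - u)` is
injective there, so the identity says exactly that `⟨φ z, w⟩ = ⟨z, φ w⟩` on the ball. Taking
`w = e_i / 2` gives `φ_i z = 2 ⟨z, φ (e_i / 2)⟩`, so `φ` is linear, and taking also `z = e_j / 2`
shows that its matrix is Hermitian. A map that is linear near `0` has that matrix as Jacobian, and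
a matrix mapping the ball into itself has operator norm at most `1`.
-/

open Matrix Filter Topology

theorem ContinuousLinearMap.opNorm_le_one_of_norm_lt_one {𝕜 E F : Type*}
    [DenselyNormedField 𝕜] [NormedAddCommGroup E] [NormedSpace 𝕜 E]
    [SeminormedAddCommGroup F] [NormedSpace 𝕜 F] {f : E →L[𝕜] F}
    (hf : ∀ x, ‖x‖ < 1 → ‖f x‖ < 1) : ‖f‖ ≤ 1 := by
  by_contra! h
  obtain ⟨x, hx, hfx⟩ := f.exists_lt_apply_of_lt_opNorm h
  exact (hfx.trans (hf x hx)).false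

theorem Complex.one_sub_log_one_sub_inj {a b : ℂ} (ha : ‖a‖ < 1) (hb : ‖b‖ < 1) :
    1 - log (1 - a) = 1 - log (1 - b) ↔ a = b := by
  refine ⟨fun h => ?_, fun h => h ▸ rfl⟩
  have one_sub_ne_zero {c : ℂ} (hc : ‖c‖ < 1) : 1 - c ≠ 0 :=
    sub_ne_zero.2 fun h1 => by simp [← h1] at hc
  have hexp := congrArg exp (sub_right_injective h)
  rwa [exp_log (one_sub_ne_zero ha), exp_log (one_sub_ne_zero hb), sub_right_inj] at hexp

theorem Matrix.IsHermitian.mulVec_dotProduct_star {n : Type*} [Fintype n] {M : Matrix n n ℂ}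
    (hM : M.IsHermitian) (z w : n → ℂ) : M *ᵥ z ⬝ᵥ star w = z ⬝ᵥ star (M *ᵥ w) := by
  rw [star_mulVec, hM.eq, dotProduct_comm, dotProduct_mulVec]
  exact dotProduct_comm _ _

variable {N : ℕ}

theorem mem_unitBall_iff {z : Fin N → ℂ} : z ∈ unitBall N ↔ ‖WithLp.toLp 2 z‖ < 1 := by
  simp [unitBall, EuclideanSpace.norm_eq, Real.sqrt_lt' one_pos]

theorem isOpen_unitBall : IsOpen (unitBall N) :=
  isOpen_lt (by fun_prop) continuous_const

theorem zero_mem_unitBall : (0 : Fin N → ℂ) ∈ unitBall N := by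
  simp [unitBall]

theorem single_half_mem_unitBall (i : Fin N) : Pi.single i (2⁻¹ : ℂ) ∈ unitBall N := by
  rw [mem_unitBall_iff, PiLp.toLp_single, PiLp.norm_single]
  norm_num

theorem norm_dotProduct_star_lt_one {z w : Fin N → ℂ} (hz : z ∈ unitBall N)
    (hw : w ∈ unitBall N) : ‖z ⬝ᵥ star w‖ < 1 := by
  rw [mem_unitBall_iff] at hz hw
  rw [← EuclideanSpace.inner_toLp_toLp]
  exact (norm_inner_le_norm _ _).trans_lt
    (mul_lt_one_of_nonneg_of_lt_one_left (norm_nonneg _) hw hz.le)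

theorem eq_mulVec_of_dotProduct_star_symm {φ : (Fin N → ℂ) → Fin N → ℂ}
    (h : ∀ z ∈ unitBall N, ∀ w ∈ unitBall N, φ z ⬝ᵥ star w = z ⬝ᵥ star (φ w))
    {z : Fin N → ℂ} (hz : z ∈ unitBall N) :
    φ z = Matrix.of (fun i j => 2 * star (φ (Pi.single i 2⁻¹) j)) *ᵥ z := by
  funext i
  have hi := h z hz _ (single_half_mem_unitBall i)
  rw [← Pi.single_star, dotProduct_single] at hi
  simp only [star_inv₀, star_ofNat] at hi
  simp only [mulVec, dotProduct, of_apply]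
  rw [← inv_mul_cancel_right₀ two_ne_zero (φ z i), hi, dotProduct, Finset.sum_mul]
  exact Finset.sum_congr rfl fun j _ => by rw [Pi.star_apply]; ring

theorem isHermitian_of_mulVec_dotProduct_star_symm {M : Matrix (Fin N) (Fin N) ℂ}
    (h : ∀ z ∈ unitBall N, ∀ w ∈ unitBall N, M *ᵥ z ⬝ᵥ star w = z ⬝ᵥ star (M *ᵥ w)) :
    M.IsHermitian := by
  ext i j
  have hij := h _ (single_half_mem_unitBall j) _ (single_half_mem_unitBall i)
  simp only [mulVec, ← Pi.single_star, dotProduct_single, single_dotProduct, Pi.star_apply,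
    star_mul', star_inv₀, star_ofNat] at hij
  rw [conjTranspose_apply]
  linear_combination -4 * hij

theorem dotProduct_star_symm_iff_exists_isHermitian {φ : (Fin N → ℂ) → Fin N → ℂ} :
    (∀ z ∈ unitBall N, ∀ w ∈ unitBall N, φ z ⬝ᵥ star w = z ⬝ᵥ star (φ w)) ↔
      ∃ M : Matrix (Fin N) (Fin N) ℂ, M.IsHermitian ∧ ∀ z ∈ unitBall N, φ z = M *ᵥ z := by
  constructor
  · intro h
    refine ⟨_, isHermitian_of_mulVec_dotProduct_star_symm fun z hz w hw => ?_,
      fun z hz => eq_mulVec_of_dotProduct_star_symm h hz⟩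
    rw [← eq_mulVec_of_dotProduct_star_symm h hz, ← eq_mulVec_of_dotProduct_star_symm h hw]
    exact h z hz w hw
  · rintro ⟨M, hM, hφM⟩ z hz w hw
    rw [hφM z hz, hφM w hw]
    exact hM.mulVec_dotProduct_star z w

theorem jac0_eq_of_eventuallyEq_mulVec {φ : (Fin N → ℂ) → Fin N → ℂ}
    {M : Matrix (Fin N) (Fin N) ℂ} (h : φ =ᶠ[𝓝 0] (M *ᵥ ·)) : jac0 N φ = M := by
  have hderiv : fderiv ℂ φ 0 = LinearMap.toContinuousLinearMap M.mulVecLin :=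
    h.fderiv_eq.trans (LinearMap.toContinuousLinearMap M.mulVecLin).fderiv
  ext i j
  simp [jac0, hderiv]

theorem norm_toEuclideanLin_le_one {M : Matrix (Fin N) (Fin N) ℂ}
    (hM : ∀ z ∈ unitBall N, M *ᵥ z ∈ unitBall N) :
    ‖LinearMap.toContinuousLinearMap (toEuclideanLin M)‖ ≤ 1 :=
  ContinuousLinearMap.opNorm_le_one_of_norm_lt_one fun x hx =>
    mem_unitBall_iff.1 (hM x.ofLp (mem_unitBall_iff.2 hx))

theorem stmt_6_general (N : ℕ)
    (φ : (Fin N → ℂ) → Fin N → ℂ)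
    (hmap : ∀ z ∈ unitBall N, φ z ∈ unitBall N) :
    ((∀ z ∈ unitBall N, ∀ w ∈ unitBall N,
        1 - Complex.log (1 - ∑ j, φ z j * conj (w j)) =
          1 - Complex.log (1 - ∑ j, z j * conj (φ w j))) ↔
      ∃ M : Matrix (Fin N) (Fin N) ℂ, M.conjTranspose = M ∧
        ∀ z ∈ unitBall N, φ z = M.mulVec z) ∧
    ((∀ z ∈ unitBall N, ∀ w ∈ unitBall N,
        1 - Complex.log (1 - ∑ j, φ z j * conj (w j)) =
          1 - Complex.log (1 - ∑ j, z j * conj (φ w j))) →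
      ∀ M : Matrix (Fin N) (Fin N) ℂ, M.conjTranspose = M →
        (∀ z ∈ unitBall N, φ z = M.mulVec z) →
        M = jac0 N φ ∧
          ‖LinearMap.toContinuousLinearMap (Matrix.toEuclideanLin M)‖ ≤ 1) := by
  have hkernel : (∀ z ∈ unitBall N, ∀ w ∈ unitBall N,
      1 - Complex.log (1 - ∑ j, φ z j * conj (w j)) =
        1 - Complex.log (1 - ∑ j, z j * conj (φ w j))) ↔
      ∀ z ∈ unitBall N, ∀ w ∈ unitBall N, φ z ⬝ᵥ star w = z ⬝ᵥ star (φ w) :=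
    forall₂_congr fun z hz => forall₂_congr fun w hw =>
      Complex.one_sub_log_one_sub_inj (norm_dotProduct_star_lt_one (hmap z hz) hw)
        (norm_dotProduct_star_lt_one hz (hmap w hw))
  refine ⟨hkernel.trans dotProduct_star_symm_iff_exists_isHermitian, fun _ M _ hφM => ⟨?_, ?_⟩⟩
  · exact (jac0_eq_of_eventuallyEq_mulVec
      (eventually_of_mem (isOpen_unitBall.mem_nhds zero_mem_unitBall) hφM)).symm
  · exact norm_toEuclideanLin_le_one fun z hz => hφM z hz ▸ hmap z hz

theorem stmt_6 (N : ℕ) (hN : 1 ≤ N)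
    (φ : (Fin N → ℂ) → Fin N → ℂ)
    (hφ : DifferentiableOn ℂ φ (unitBall N))
    (hmap : ∀ z ∈ unitBall N, φ z ∈ unitBall N) :
    ((∀ z ∈ unitBall N, ∀ w ∈ unitBall N,
        1 - Complex.log (1 - ∑ j, φ z j * conj (w j)) =
          1 - Complex.log (1 - ∑ j, z j * conj (φ w j))) ↔
      ∃ M : Matrix (Fin N) (Fin N) ℂ, M.conjTranspose = M ∧
        ∀ z ∈ unitBall N, φ z = M.mulVec z) ∧
    ((∀ z ∈ unitBall N, ∀ w ∈ unitBall N,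
        1 - Complex.log (1 - ∑ j, φ z j * conj (w j)) =
          1 - Complex.log (1 - ∑ j, z j * conj (φ w j))) →
      ∀ M : Matrix (Fin N) (Fin N) ℂ, M.conjTranspose = M →
        (∀ z ∈ unitBall N, φ z = M.mulVec z) →
        M = jac0 N φ ∧
          ‖LinearMap.toContinuousLinearMap (Matrix.toEuclideanLin M)‖ ≤ 1) :=
  stmt_6_general N φ hmap
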